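/- Let X^ε be an asymptotically regular continuous-time Markov chain on finite S (N ≥ 2) with irreducible skeleton chain, let μ(j) = lim_{ε↓0} μ(j,ε) be the limiting stationary distribution, and let t(ε) satisfy T̄(ε) = o(t(ε)) as ε ↓ 0, where T̄(ε) = ∑_i λ(i) T(i,ε). Then for all i, j ∈ S, lim_{ε↓0} P_i(X^ε_{t(ε)} = j) = μ(j). -/

import Mathlib

/-!
The transition matrix `exp (t • Q_ε)` is row-stochastic and fixes `μ(·, ε)`. Put
`a_ε = T̄(ε) / min λ`: every state `i` has total rate `q_i ≥ 1 / a_ε`, and the state `k` of smallest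
total rate has `q_k a_ε ≤ 1 / min λ`. Along a path of the skeleton chain from `i` to `k` (of length
at most some `L` independent of `ε`) each jump happens within time `a_ε` with probability at least
`β / 2`, and once at `k` the chain stays there for the time `(L + 1) a_ε` with probability at least
`exp (-(L + 1) / min λ)`. So every row of `exp ((L + 1) a_ε • Q_ε)` gives mass at least `c > 0` to
`k`, with `c` independent of `ε`. This Doeblin condition contracts the total variation distance to
`μ(·, ε)` by the factor `1 - c` in each period `(L + 1) a_ε`, and the number of periods in `t(ε)`
tends to infinity because `T̄(ε) = o(t(ε))`.
-/

open Filter Topology Finset NormedSpace Set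
open scoped Nat Matrix

/-- The generator matrix of the chain with rates `q i j` (`i ≠ j`). -/
noncomputable def generator {N : ℕ} (q : Fin N → Fin N → ℝ) :
    Matrix (Fin N) (Fin N) ℝ :=
  Matrix.of fun i j => if i = j then -(∑ k ∈ Finset.univ.erase i, q i k) else q i j

theorem mul_one_sub_exp_le_of_hasDerivWithinAt {f f' : ℝ → ℝ} {α γ b s : ℝ} (hα : 0 < α)
    (hf : ContinuousOn f (Icc b s)) (hf' : ∀ x ∈ Ico b s, HasDerivWithinAt f (f' x) (Ici x) x)
    (hb : 0 ≤ f b) (bound : ∀ x ∈ Ico b s, α * (γ - f x) ≤ f' x) (hbs : b ≤ s) :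
    γ * (1 - Real.exp (-(α * (s - b)))) ≤ f s := by
  have h := le_gronwallBound_of_liminf_deriv_right_le (f := fun x => -f x) (f' := fun x => -f' x)
    (δ := 0) (K := -α) (ε := -(α * γ)) hf.neg
    (fun x hx r hr => (hf' x hx).neg.liminf_right_slope_le hr) (by simpa using hb)
    (fun x hx => by linarith [bound x hx]) s (right_mem_Icc.2 hbs)
  rw [gronwallBound_of_K_ne_0 (neg_ne_zero.2 hα.ne')] at h
  simp only [zero_mul, zero_add, neg_mul, neg_div_neg_eq, mul_div_cancel_left₀ _ hα.ne'] at h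
  linarith

section BanachAlgebra

variable {𝔸 : Type*} [NormedRing 𝔸] [NormedAlgebra ℝ 𝔸] [CompleteSpace 𝔸]

theorem exp_mul_eq_self_of_mul_eq_zero {a x : 𝔸} (h : a * x = 0) : exp a * x = x := by
  have hterm : ∀ k ≠ 0, (k !⁻¹ : ℝ) • a ^ k * x = 0 := fun k hk => by
    rw [← Nat.succ_pred_eq_of_ne_zero hk, pow_succ, smul_mul_assoc, mul_assoc, h, mul_zero,
      smul_zero]
  exact ((exp_series_hasSum_exp' (𝕂 := ℝ) a).mul_right x).unique
    (by simpa using hasSum_single 0 hterm)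

theorem mul_exp_eq_self_of_mul_eq_zero {a x : 𝔸} (h : x * a = 0) : x * exp a = x := by
  have hterm : ∀ k ≠ 0, x * (k !⁻¹ : ℝ) • a ^ k = 0 := fun k hk => by
    rw [← Nat.succ_pred_eq_of_ne_zero hk, pow_succ', mul_smul_comm, ← mul_assoc, h, zero_mul,
      smul_zero]
  exact ((exp_series_hasSum_exp' (𝕂 := ℝ) a).mul_left x).unique
    (by simpa using hasSum_single 0 hterm)

end BanachAlgebra

namespace Matrix

variable {n : Type*} [Fintype n] [DecidableEq n]

/-! ### The exponential of a real matrix -/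

-- Matrices carry no canonical norm; `exp` does not depend on the choice, so we use the
-- `L∞` operator norm whenever the Banach algebra API is needed.
theorem exp_mulVec_eq_self_of_mulVec_eq_zero {M : Matrix n n ℝ} {v : n → ℝ} (h : M *ᵥ v = 0) :
    exp M *ᵥ v = v := by
  let _ : NormedRing (Matrix n n ℝ) := Matrix.linftyOpNormedRing
  let _ : NormedAlgebra ℝ (Matrix n n ℝ) := Matrix.linftyOpNormedAlgebra
  have := exp_mul_eq_self_of_mul_eq_zero (x := (replicateCol n v : Matrix n n ℝ)) (a := M)
    (by rw [← replicateCol_mulVec, h, replicateCol_zero])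
  rw [← replicateCol_mulVec] at this
  ext i
  exact congrFun (congrFun this i) i

theorem vecMul_exp_eq_self_of_vecMul_eq_zero {M : Matrix n n ℝ} {v : n → ℝ} (h : v ᵥ* M = 0) :
    v ᵥ* exp M = v := by
  let _ : NormedRing (Matrix n n ℝ) := Matrix.linftyOpNormedRing
  let _ : NormedAlgebra ℝ (Matrix n n ℝ) := Matrix.linftyOpNormedAlgebra
  have := mul_exp_eq_self_of_mul_eq_zero (x := (replicateRow n v : Matrix n n ℝ)) (a := M)
    (by rw [← replicateRow_vecMul, h, replicateRow_zero])
  rw [← replicateRow_vecMul] at this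
  ext j
  exact congrFun (congrFun this j) j

theorem hasSum_exp_apply (B : Matrix n n ℝ) (i j : n) :
    HasSum (fun k : ℕ => (k !⁻¹ : ℝ) * (B ^ k) i j) (exp B i j) := by
  let _ : NormedRing (Matrix n n ℝ) := Matrix.linftyOpNormedRing
  let _ : NormedAlgebra ℝ (Matrix n n ℝ) := Matrix.linftyOpNormedAlgebra
  exact Pi.hasSum.1 (Pi.hasSum.1 (exp_series_hasSum_exp' (𝕂 := ℝ) B) i) j

theorem exp_smul_one (c : ℝ) : exp (c • (1 : Matrix n n ℝ)) = Real.exp c • 1 := by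
  let _ : NormedRing (Matrix n n ℝ) := Matrix.linftyOpNormedRing
  let _ : NormedAlgebra ℝ (Matrix n n ℝ) := Matrix.linftyOpNormedAlgebra
  have := algebraMap_exp_comm (𝕂 := ℝ) (𝔸 := Matrix n n ℝ) c
  rw [Algebra.algebraMap_eq_smul_one, Algebra.algebraMap_eq_smul_one, ← Real.exp_eq_exp_ℝ] at this
  exact this.symm

theorem hasDerivAt_exp_smul_apply (Q : Matrix n n ℝ) (i j : n) (s : ℝ) :
    HasDerivAt (fun u : ℝ => exp (u • Q) i j) ((Q * exp (s • Q)) i j) s := by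
  let _ : NormedRing (Matrix n n ℝ) := Matrix.linftyOpNormedRing
  let _ : NormedAlgebra ℝ (Matrix n n ℝ) := Matrix.linftyOpNormedAlgebra
  exact (entryLinearMap ℝ ℝ i j).toContinuousLinearMap.hasFDerivAt.comp_hasDerivAt s
    (hasDerivAt_exp_smul_const' Q s)

theorem exp_add_smul_one (Q : Matrix n n ℝ) (c : ℝ) :
    exp (Q + c • 1) = Real.exp c • exp Q := by
  rw [exp_add_of_commute _ _ ((Commute.one_right Q).smul_right c), exp_smul_one, mul_smul_one]

theorem pow_self_le_pow_apply_self {B : Matrix n n ℝ} (hB : ∀ i j, 0 ≤ B i j) (k : ℕ) (i : n) :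
    B i i ^ k ≤ (B ^ k) i i := by
  induction k with
  | zero => simp
  | succ k ih =>
    rw [pow_succ, pow_succ, mul_apply]
    calc B i i ^ k * B i i ≤ (B ^ k) i i * B i i := mul_le_mul_of_nonneg_right ih (hB i i)
      _ ≤ ∑ m, (B ^ k) i m * B m i :=
        single_le_sum (f := fun m => (B ^ k) i m * B m i)
          (fun m _ => mul_nonneg (pow_apply_nonneg hB k i m) (hB m i)) (mem_univ i)

theorem exp_apply_nonneg_of_nonneg {B : Matrix n n ℝ} (hB : ∀ i j, 0 ≤ B i j) (i j : n) :
    0 ≤ exp B i j :=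
  (hasSum_exp_apply B i j).nonneg fun k => mul_nonneg (by positivity) (pow_apply_nonneg hB k i j)

theorem exp_apply_self_ge_of_nonneg {B : Matrix n n ℝ} (hB : ∀ i j, 0 ≤ B i j) (i : n) :
    Real.exp (B i i) ≤ exp B i i := by
  have hexp : HasSum (fun k : ℕ => (k !⁻¹ : ℝ) * B i i ^ k) (Real.exp (B i i)) := by
    simpa [Real.exp_eq_exp_ℝ] using exp_series_hasSum_exp' (𝕂 := ℝ) (B i i)
  exact hasSum_le (fun k => mul_le_mul_of_nonneg_left (pow_self_le_pow_apply_self hB k i)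
    (by positivity)) hexp (hasSum_exp_apply B i i)

/-! ### Matrices with nonnegative off-diagonal entries -/

theorem exists_nonneg_add_smul_one {Q : Matrix n n ℝ} (hQ : ∀ i j, i ≠ j → 0 ≤ Q i j) :
    ∃ c : ℝ, ∀ i j, 0 ≤ (Q + c • 1) i j := by
  refine ⟨∑ m, |Q m m|, fun i j => ?_⟩
  rcases eq_or_ne i j with rfl | hij
  · have := single_le_sum (f := fun m => |Q m m|) (fun m _ => abs_nonneg _) (mem_univ i)
    simp only [add_apply, smul_apply, one_apply_eq, smul_eq_mul, mul_one]
    linarith [neg_abs_le (Q i i)]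
  · simpa [hij] using hQ i j hij

theorem exp_apply_nonneg_of_metzler {Q : Matrix n n ℝ} (hQ : ∀ i j, i ≠ j → 0 ≤ Q i j)
    (i j : n) : 0 ≤ exp Q i j := by
  obtain ⟨c, hc⟩ := exists_nonneg_add_smul_one hQ
  have := exp_apply_nonneg_of_nonneg hc i j
  rw [exp_add_smul_one, smul_apply, smul_eq_mul] at this
  exact nonneg_of_mul_nonneg_right this (Real.exp_pos c)

theorem exp_apply_self_ge_of_metzler {Q : Matrix n n ℝ} (hQ : ∀ i j, i ≠ j → 0 ≤ Q i j)
    (i : n) : Real.exp (Q i i) ≤ exp Q i i := by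
  obtain ⟨c, hc⟩ := exists_nonneg_add_smul_one hQ
  have := exp_apply_self_ge_of_nonneg hc i
  rw [exp_add_smul_one, smul_apply, smul_eq_mul, add_apply, smul_apply, one_apply_eq, smul_eq_mul,
    mul_one, Real.exp_add, mul_comm] at this
  exact le_of_mul_le_mul_left this (Real.exp_pos c)

theorem exp_smul_apply_nonneg {Q : Matrix n n ℝ} (hQ : ∀ i j, i ≠ j → 0 ≤ Q i j) {s : ℝ}
    (hs : 0 ≤ s) (i j : n) : 0 ≤ exp (s • Q) i j :=
  exp_apply_nonneg_of_metzler (fun i j h => mul_nonneg hs (hQ i j h)) i j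

theorem exp_mul_le_exp_smul_apply_self {Q : Matrix n n ℝ} (hQ : ∀ i j, i ≠ j → 0 ≤ Q i j)
    {s : ℝ} (hs : 0 ≤ s) (i : n) : Real.exp (s * Q i i) ≤ exp (s • Q) i i :=
  exp_apply_self_ge_of_metzler (fun i j h => mul_nonneg hs (hQ i j h)) i

theorem exp_smul_mem_rowStochastic {Q : Matrix n n ℝ} (hQ : ∀ i j, i ≠ j → 0 ≤ Q i j)
    (hQ1 : Q *ᵥ 1 = 0) {s : ℝ} (hs : 0 ≤ s) : exp (s • Q) ∈ rowStochastic ℝ n :=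
  mem_rowStochastic.2 ⟨exp_smul_apply_nonneg hQ hs,
    exp_mulVec_eq_self_of_mulVec_eq_zero (by rw [smul_mulVec, hQ1, smul_zero])⟩

theorem vecMul_exp_smul_eq_self {Q : Matrix n n ℝ} {π : n → ℝ} (hπQ : π ᵥ* Q = 0) (s : ℝ) :
    π ᵥ* exp (s • Q) = π :=
  vecMul_exp_eq_self_of_vecMul_eq_zero (by rw [vecMul_smul, hπQ, smul_zero])

/-! ### Lower bounds along paths of the skeleton -/

theorem le_exp_smul_apply_of_jump {Q : Matrix n n ℝ} (hQ : ∀ i j, i ≠ j → 0 ≤ Q i j)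
    {i m k : n} (him : i ≠ m) {β a c s : ℝ} (hβ : 0 ≤ β) (hβQ : β * -Q i i ≤ Q i m)
    (ha : 0 < a) (hra : 1 ≤ -Q i i * a) (has : a ≤ s) (hc : 0 ≤ c)
    (hmk : ∀ u ∈ Icc (s - a) s, c ≤ exp (u • Q) m k) :
    β * c / 2 ≤ exp (s • Q) i k := by
  have hr : 0 < -Q i i := pos_of_mul_pos_left (one_pos.trans_le hra) ha.le
  have hderiv := hasDerivAt_exp_smul_apply Q i k
  -- On `[s - a, s]` the jump `i → m` feeds `exp (u • Q) i k` at rate at least `Q i m * c`.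
  have hgron : β * c * (1 - Real.exp (-(-Q i i * a))) ≤ exp (s • Q) i k := by
    rw [← sub_sub_cancel s a]
    refine mul_one_sub_exp_le_of_hasDerivWithinAt hr
      (fun x _ => (hderiv x).continuousAt.continuousWithinAt)
      (fun x _ => (hderiv x).hasDerivWithinAt) (exp_smul_apply_nonneg hQ (by linarith) i k)
      (fun x hx => ?_) (by linarith)
    have hE : ∀ m', 0 ≤ exp (x • Q) m' k := fun m' =>
      exp_smul_apply_nonneg hQ (by linarith [hx.1]) m' k
    have hjump : Q i m * c ≤ ∑ m' ∈ univ.erase i, Q i m' * exp (x • Q) m' k :=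
      (mul_le_mul_of_nonneg_left (hmk x ⟨hx.1, hx.2.le⟩) (hQ i m him)).trans
        (single_le_sum (f := fun m' => Q i m' * exp (x • Q) m' k)
          (fun m' hm' => mul_nonneg (hQ i m' (ne_of_mem_erase hm').symm) (hE m'))
          (mem_erase.2 ⟨him.symm, mem_univ m⟩))
    rw [mul_apply, ← add_sum_erase _ _ (mem_univ i)]
    nlinarith
  have hexp : Real.exp (-(-Q i i * a)) ≤ 1 / 2 :=
    (Real.exp_le_exp.2 (by linarith)).trans Real.exp_neg_one_lt_half.le
  nlinarith [mul_nonneg hβ hc]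

theorem exists_pos_of_pow_succ_apply_pos {W : Matrix n n ℝ} (hW : ∀ i j, 0 ≤ W i j) {ℓ : ℕ}
    {i k : n} (h : 0 < (W ^ (ℓ + 1)) i k) : ∃ m, 0 < W i m ∧ 0 < (W ^ ℓ) m k := by
  rw [pow_succ', mul_apply] at h
  obtain ⟨m, -, hm⟩ := (sum_pos_iff_of_nonneg fun m _ =>
    mul_nonneg (hW i m) (pow_apply_nonneg hW ℓ m k)).1 h
  exact ⟨m, pos_of_mul_pos_left hm (pow_apply_nonneg hW ℓ m k),
    pos_of_mul_pos_right hm (hW i m)⟩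

theorem le_exp_smul_apply_of_pow_apply_pos {Q W : Matrix n n ℝ}
    (hQ : ∀ i j, i ≠ j → 0 ≤ Q i j) (hW0 : ∀ i j, 0 ≤ W i j) {β a S : ℝ}
    (hW : ∀ i j, 0 < W i j → i ≠ j ∧ β * -Q i i ≤ Q i j) (hβ : 0 ≤ β) (ha : 0 < a)
    (hra : ∀ i, 1 ≤ -Q i i * a) {k : n} (ℓ : ℕ) (i : n) (hik : 0 < (W ^ ℓ) i k) :
    ∀ s ∈ Icc (ℓ * a) S, (β / 2) ^ ℓ * Real.exp (S * Q k k) ≤ exp (s • Q) i k := by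
  induction ℓ generalizing i with
  | zero =>
    intro s hs
    obtain rfl : i = k := by
      by_contra h
      simp [one_apply_ne h] at hik
    have hQi : Q i i ≤ 0 := by nlinarith [hra i]
    have hs0 : 0 ≤ s := by simpa using hs.1
    calc (β / 2) ^ 0 * Real.exp (S * Q i i) = Real.exp (S * Q i i) := by simp
      _ ≤ Real.exp (s * Q i i) := Real.exp_le_exp.2 (by nlinarith [hs.2])
      _ ≤ exp (s • Q) i i := exp_mul_le_exp_smul_apply_self hQ hs0 i
  | succ ℓ ih =>
    intro s hs
    obtain ⟨m, him, hmk⟩ := exists_pos_of_pow_succ_apply_pos hW0 hik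
    obtain ⟨hne, hβQ⟩ := hW i m him
    have hℓ : (ℓ : ℝ) * a + a ≤ s := by push_cast at hs; linarith [hs.1]
    calc (β / 2) ^ (ℓ + 1) * Real.exp (S * Q k k)
        = β * ((β / 2) ^ ℓ * Real.exp (S * Q k k)) / 2 := by ring
      _ ≤ exp (s • Q) i k :=
        le_exp_smul_apply_of_jump hQ hne hβ hβQ ha (hra i) (by nlinarith [ℓ.cast_nonneg (α := ℝ)])
          (by positivity) fun u hu => ih m hmk u ⟨by linarith [hu.1], hu.2.trans hs.2⟩

/-! ### Doeblin contraction for stochastic matrices -/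

theorem vecMul_pow_eq_self {P : Matrix n n ℝ} {v : n → ℝ} (hv : v ᵥ* P = v) (ℓ : ℕ) :
    v ᵥ* P ^ ℓ = v := by
  induction ℓ with
  | zero => simp
  | succ ℓ ih => rw [pow_succ, ← vecMul_vecMul, ih, hv]

theorem pos_of_vecMul_eq_self {P : Matrix n n ℝ} (hP : ∀ i j, 0 ≤ P i j)
    (hirr : ∀ i j, ∃ ℓ, 0 < (P ^ ℓ) i j) {v : n → ℝ} (hv0 : ∀ i, 0 ≤ v i) (hv : v ᵥ* P = v)
    (hne : v ≠ 0) (j : n) : 0 < v j := by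
  obtain ⟨i, hi⟩ := Function.ne_iff.1 hne
  obtain ⟨ℓ, hℓ⟩ := hirr i j
  rw [← vecMul_pow_eq_self hv ℓ]
  exact lt_of_lt_of_le (mul_pos ((hv0 i).lt_of_ne' hi) hℓ)
    (single_le_sum (f := fun u => v u * (P ^ ℓ) u j)
      (fun u _ => mul_nonneg (hv0 u) (pow_apply_nonneg hP ℓ u j)) (mem_univ i))

theorem sum_vecMul_of_mem_rowStochastic {A : Matrix n n ℝ} (hA : A ∈ rowStochastic ℝ n)
    (w : n → ℝ) : ∑ j, (w ᵥ* A) j = ∑ i, w i := by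
  calc ∑ j, (w ᵥ* A) j = w ᵥ* A ⬝ᵥ 1 := by simp [dotProduct]
    _ = w ⬝ᵥ A *ᵥ 1 := (dotProduct_mulVec w A 1).symm
    _ = ∑ i, w i := by simp [one_vecMul_of_mem_rowStochastic hA, dotProduct]

theorem sum_abs_vecMul_le_of_mem_rowStochastic {A : Matrix n n ℝ}
    (hA : A ∈ rowStochastic ℝ n) {c : ℝ} {k : n} (hAk : ∀ i, c ≤ A i k) {w : n → ℝ}
    (hw : ∑ i, w i = 0) : ∑ j, |(w ᵥ* A) j| ≤ (1 - c) * ∑ i, |w i| := by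
  set B : Matrix n n ℝ := A - of fun _ j => Pi.single k c j
  have hB0 : ∀ i j, 0 ≤ B i j := by
    intro i j
    rcases eq_or_ne j k with rfl | hj
    · simpa [B] using hAk i
    · simpa [B, hj] using nonneg_of_mem_rowStochastic hA
  have hB1 : ∀ i, ∑ j, B i j = 1 - c := fun i => by
    simp [B, sum_sub_distrib, sum_row_of_mem_rowStochastic hA]
  -- `B` differs from `A` by a matrix with constant columns, which `w` annihilates.
  have hwB : w ᵥ* A = w ᵥ* B := by
    ext j
    simp only [B, vecMul, dotProduct, sub_apply, of_apply, mul_sub, sum_sub_distrib, ← sum_mul, hw,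
      zero_mul, sub_zero]
  calc ∑ j, |(w ᵥ* A) j| = ∑ j, |∑ i, w i * B i j| := by rw [hwB]; rfl
    _ ≤ ∑ j, ∑ i, |w i| * B i j := sum_le_sum fun j _ =>
        (abs_sum_le_sum_abs _ _).trans_eq (sum_congr rfl fun i _ => by
          rw [abs_mul, abs_of_nonneg (hB0 i j)])
    _ = (1 - c) * ∑ i, |w i| := by
        rw [sum_comm, mul_sum]
        exact sum_congr rfl fun i _ => by rw [← mul_sum, hB1, mul_comm]

theorem sum_abs_vecMul_pow_le_of_mem_rowStochastic {A : Matrix n n ℝ}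
    (hA : A ∈ rowStochastic ℝ n) {c : ℝ} {k : n} (hAk : ∀ i, c ≤ A i k) {w : n → ℝ}
    (hw : ∑ i, w i = 0) (ℓ : ℕ) : ∑ j, |(w ᵥ* A ^ ℓ) j| ≤ (1 - c) ^ ℓ * ∑ i, |w i| := by
  have hc : c ≤ 1 := (hAk k).trans (le_one_of_mem_rowStochastic hA)
  induction ℓ with
  | zero => simp
  | succ ℓ ih =>
    rw [pow_succ, ← vecMul_vecMul, pow_succ', mul_assoc]
    refine (sum_abs_vecMul_le_of_mem_rowStochastic hA hAk ?_).trans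
      (mul_le_mul_of_nonneg_left ih (by linarith))
    rw [sum_vecMul_of_mem_rowStochastic (pow_mem hA ℓ), hw]

theorem abs_pow_mul_apply_sub_le {A B : Matrix n n ℝ} (hA : A ∈ rowStochastic ℝ n)
    (hB : B ∈ rowStochastic ℝ n) {c : ℝ} {k : n} (hAk : ∀ i, c ≤ A i k) {π : n → ℝ}
    (hπ0 : ∀ i, 0 ≤ π i) (hπ1 : ∑ i, π i = 1) (hπA : π ᵥ* A = π) (hπB : π ᵥ* B = π)
    (ℓ : ℕ) (i j : n) : |(A ^ ℓ * B) i j - π j| ≤ 2 * (1 - c) ^ ℓ := by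
  have hc : c ≤ 1 := (hAk k).trans (le_one_of_mem_rowStochastic hA)
  set w : n → ℝ := Pi.single i 1 - π
  have hw : ∑ m, w m = 0 := by simp [w, sum_sub_distrib, hπ1]
  have hdiff : (A ^ ℓ * B) i j - π j = ((w ᵥ* A ^ ℓ) ᵥ* B) j := by
    rw [vecMul_vecMul, sub_vecMul, single_one_vecMul, ← vecMul_vecMul, vecMul_pow_eq_self hπA, hπB]
    rfl
  have hw2 : ∑ m, |w m| ≤ 2 := by
    calc ∑ m, |w m| ≤ ∑ m, ((Pi.single i 1 : n → ℝ) m + π m) := sum_le_sum fun m _ => by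
          refine (abs_sub _ _).trans ?_
          rw [abs_of_nonneg (hπ0 m), abs_of_nonneg (by by_cases h : m = i <;> simp [h])]
      _ = 2 := by simp [sum_add_distrib, hπ1]; norm_num
  calc |(A ^ ℓ * B) i j - π j| ≤ ∑ j', |((w ᵥ* A ^ ℓ) ᵥ* B) j'| := by
        rw [hdiff]
        exact single_le_sum (f := fun j' => |((w ᵥ* A ^ ℓ) ᵥ* B) j'|)
          (fun _ _ => abs_nonneg _) (mem_univ j)
    _ ≤ (1 - 0) * ∑ m, |(w ᵥ* A ^ ℓ) m| :=
        sum_abs_vecMul_le_of_mem_rowStochastic hB (k := j)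
          (fun _ => nonneg_of_mem_rowStochastic hB)
          (by rw [sum_vecMul_of_mem_rowStochastic (pow_mem hA ℓ), hw])
    _ ≤ (1 - c) ^ ℓ * 2 := by
        rw [sub_zero, one_mul]
        exact (sum_abs_vecMul_pow_le_of_mem_rowStochastic hA hAk hw ℓ).trans
          (mul_le_mul_of_nonneg_left hw2 (pow_nonneg (by linarith) ℓ))
    _ = 2 * (1 - c) ^ ℓ := mul_comm _ _

/-! ### Mixing of `exp (t • Q)` -/

theorem abs_exp_smul_apply_sub_le {Q : Matrix n n ℝ} (hQ : ∀ i j, i ≠ j → 0 ≤ Q i j)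
    (hQ1 : Q *ᵥ 1 = 0) {π : n → ℝ} (hπ0 : ∀ i, 0 ≤ π i) (hπ1 : ∑ i, π i = 1)
    (hπQ : π ᵥ* Q = 0) {S c : ℝ} {k : n} (hS : 0 < S) (hk : ∀ i, c ≤ exp (S • Q) i k) {t : ℝ}
    (ht : 0 ≤ t) (i j : n) : |exp (t • Q) i j - π j| ≤ 2 * (1 - c) ^ ⌊t / S⌋₊ := by
  set ℓ := ⌊t / S⌋₊
  have hℓ : ℓ * S ≤ t := (le_div_iff₀ hS).1 (Nat.floor_le (div_nonneg ht hS.le))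
  have hsplit : exp (t • Q) = exp (S • Q) ^ ℓ * exp ((t - ℓ * S) • Q) := by
    rw [← exp_nsmul, ← exp_add_of_commute _ _
        ((((Commute.refl Q).smul_left S).smul_left ℓ).smul_right _),
      ← Nat.cast_smul_eq_nsmul ℝ, smul_smul, ← add_smul, add_sub_cancel]
  rw [hsplit]
  exact abs_pow_mul_apply_sub_le (exp_smul_mem_rowStochastic hQ hQ1 hS.le)
    (exp_smul_mem_rowStochastic hQ hQ1 (by linarith)) hk hπ0 hπ1 (vecMul_exp_smul_eq_self hπQ S)
    (vecMul_exp_smul_eq_self hπQ _) ℓ i j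

theorem abs_exp_smul_apply_sub_le_of_skeleton {Q W : Matrix n n ℝ}
    (hQ : ∀ i j, i ≠ j → 0 ≤ Q i j) (hQ1 : Q *ᵥ 1 = 0) {π : n → ℝ} (hπ0 : ∀ i, 0 ≤ π i)
    (hπ1 : ∑ i, π i = 1) (hπQ : π ᵥ* Q = 0) (hW0 : ∀ i j, 0 ≤ W i j) {β : ℝ} (hβ0 : 0 ≤ β)
    (hβ1 : β ≤ 1) (hW : ∀ i j, 0 < W i j → i ≠ j ∧ β * -Q i i ≤ Q i j) {L : ℕ}
    (hL : ∀ i j, ∃ ℓ ≤ L, 0 < (W ^ ℓ) i j) {a K : ℝ} {k : n} (ha : 0 < a)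
    (hra : ∀ i, 1 ≤ -Q i i * a) (hka : -Q k k * a ≤ K) {t : ℝ} (ht : 0 ≤ t) (i j : n) :
    |exp (t • Q) i j - π j| ≤
      2 * (1 - (β / 2) ^ L * Real.exp (-((L + 1) * K))) ^ ⌊t / ((L + 1) * a)⌋₊ := by
  refine abs_exp_smul_apply_sub_le hQ hQ1 hπ0 hπ1 hπQ (k := k) (by positivity) (fun u => ?_) ht i j
  obtain ⟨ℓ, hℓL, hℓ⟩ := hL u k
  have hℓL' : (ℓ : ℝ) ≤ L := by exact_mod_cast hℓL
  refine le_trans ?_ (le_exp_smul_apply_of_pow_apply_pos hQ hW0 hW hβ0 ha hra ℓ u hℓ _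
    ⟨by nlinarith, le_rfl⟩)
  exact mul_le_mul (pow_le_pow_of_le_one (by positivity) (by linarith) hℓL)
    (Real.exp_le_exp.2 (by nlinarith)) (Real.exp_pos _).le (by positivity)

end Matrix

theorem le_mul_sum_mul_inv {ι : Type*} [Fintype ι] {w r : ι → ℝ} (hw : ∀ i, 0 ≤ w i)
    (hr : ∀ i, 0 < r i) (i : ι) : w i ≤ r i * ∑ j, w j * (r j)⁻¹ := by
  have := single_le_sum (f := fun j => w j * (r j)⁻¹)
    (fun j _ => mul_nonneg (hw j) (inv_nonneg.2 (hr j).le)) (mem_univ i)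
  calc w i = r i * (w i * (r i)⁻¹) := by field_simp [(hr i).ne']
    _ ≤ r i * ∑ j, w j * (r j)⁻¹ := mul_le_mul_of_nonneg_left this (hr i).le

theorem exists_mul_sum_mul_inv_le_one {ι : Type*} [Fintype ι] [Nonempty ι] {w r : ι → ℝ}
    (hw : ∀ i, 0 ≤ w i) (hw1 : ∑ i, w i = 1) (hr : ∀ i, 0 < r i) :
    ∃ k, r k * ∑ j, w j * (r j)⁻¹ ≤ 1 := by
  obtain ⟨k, -, hk⟩ := exists_min_image univ r univ_nonempty
  refine ⟨k, ?_⟩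
  calc r k * ∑ j, w j * (r j)⁻¹ = ∑ j, w j * (r k / r j) := by
        rw [mul_sum]; exact sum_congr rfl fun j _ => by ring
    _ ≤ ∑ j, w j := sum_le_sum fun j _ => mul_le_of_le_one_right (hw j)
        ((div_le_one (hr j)).2 (hk j (mem_univ j)))
    _ = 1 := hw1

theorem nonneg_of_tendsto_div_sum_erase {α n : Type*} [Fintype n] [DecidableEq n]
    {l : Filter α} [l.NeBot] {q : α → n → n → ℝ} {P : Matrix n n ℝ}
    (hP : ∀ i j, i ≠ j → Tendsto (fun x => q x i j / ∑ k ∈ univ.erase i, q x i k) l (𝓝 (P i j)))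
    (hPdiag : ∀ i, P i i = 0) (hq : ∀ᶠ x in l, ∀ i j, i ≠ j → 0 ≤ q x i j) (i j : n) :
    0 ≤ P i j := by
  rcases eq_or_ne i j with rfl | hij
  · exact (hPdiag i).ge
  · exact ge_of_tendsto (hP i j hij) (hq.mono fun x hx => div_nonneg (hx i j hij)
      (sum_nonneg fun k hk => hx i k (ne_of_mem_erase hk).symm))

theorem exists_eventually_mul_sum_erase_le {α n : Type*} [Fintype n] [DecidableEq n]
    {l : Filter α} {q : α → n → n → ℝ} {P : Matrix n n ℝ}
    (hP : ∀ i j, i ≠ j → Tendsto (fun x => q x i j / ∑ k ∈ univ.erase i, q x i k) l (𝓝 (P i j)))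
    (hPdiag : ∀ i, P i i = 0) (hr : ∀ᶠ x in l, ∀ i, 0 < ∑ k ∈ univ.erase i, q x i k) :
    ∃ β, 0 < β ∧ β ≤ 1 ∧
      ∀ᶠ x in l, ∀ i j, 0 < P i j → β * ∑ k ∈ univ.erase i, q x i k ≤ q x i j := by
  have hsmall : ∀ i j, ∀ᶠ β in 𝓝[>] (0 : ℝ), 0 < P i j → β < P i j := fun i j => by
    by_cases h : 0 < P i j
    · exact ((eventually_lt_nhds h).filter_mono nhdsWithin_le_nhds).mono fun _ hβ _ => hβ
    · exact Eventually.of_forall fun _ h' => absurd h' h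
  obtain ⟨β, ⟨hβP, hβ1⟩, hβ0⟩ := (((eventually_all.2 fun i => eventually_all.2 (hsmall i)).and
    ((eventually_lt_nhds one_pos).filter_mono nhdsWithin_le_nhds)).and self_mem_nhdsWithin).exists
  refine ⟨β, hβ0, hβ1.le, ?_⟩
  have hratio : ∀ i j, ∀ᶠ x in l, 0 < P i j → β < q x i j / ∑ k ∈ univ.erase i, q x i k :=
    fun i j => by
      by_cases h : 0 < P i j
      · have hij : i ≠ j := by rintro rfl; simp [hPdiag] at h
        exact ((hP i j hij).eventually (eventually_gt_nhds (hβP i j h))).mono fun _ hx _ => hx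
      · exact Eventually.of_forall fun _ h' => absurd h' h
  filter_upwards [eventually_all.2 fun i => eventually_all.2 (hratio i), hr] with x hx hrx i j hij
  exact ((lt_div_iff₀ (hrx i)).1 (hx i j hij)).le

theorem tendsto_natFloor_div_mul_atTop {α : Type*} {l : Filter α} {f g : α → ℝ}
    (hfg : Tendsto (fun x => f x / g x) l (𝓝 0)) (hf : ∀ᶠ x in l, 0 < f x)
    (hg : ∀ᶠ x in l, 0 < g x) {C : ℝ} (hC : 0 < C) :
    Tendsto (fun x => ⌊g x / (C * f x)⌋₊) l atTop := by
  have hpos : Tendsto (fun x => f x / g x) l (𝓝[>] 0) := tendsto_nhdsWithin_iff.2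
    ⟨hfg, by filter_upwards [hf, hg] with x hfx hgx using div_pos hfx hgx⟩
  refine tendsto_nat_floor_atTop.comp
    (((tendsto_inv_nhdsGT_zero.comp hpos).atTop_div_const hC).congr fun x => ?_)
  simp only [Function.comp_apply, inv_div, div_div, mul_comm]

theorem tendsto_of_abs_sub_le_two_mul_pow {α : Type*} {l : Filter α} {f g : α → ℝ} {m : α → ℕ}
    {c y : ℝ} (hc0 : 0 < c) (hc1 : c ≤ 1) (hm : Tendsto m l atTop) (hg : Tendsto g l (𝓝 y))
    (hfg : ∀ᶠ x in l, |f x - g x| ≤ 2 * (1 - c) ^ m x) : Tendsto f l (𝓝 y) := by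
  have hlim := ((tendsto_pow_atTop_nhds_zero_of_lt_one (r := 1 - c) (by linarith)
    (by linarith)).comp hm).const_mul 2
  rw [mul_zero] at hlim
  have hsum := (squeeze_zero_norm' (hfg.mono fun x hx => by rwa [Real.norm_eq_abs]) hlim).add hg
  rw [zero_add] at hsum
  exact hsum.congr fun x => sub_add_cancel (f x) (g x)

section Generator

variable {N : ℕ}

theorem generator_apply_of_ne (q : Fin N → Fin N → ℝ) {i j : Fin N} (h : i ≠ j) :
    generator q i j = q i j := by
  simp [generator, h]

theorem generator_apply_self (q : Fin N → Fin N → ℝ) (i : Fin N) :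
    generator q i i = -∑ k ∈ univ.erase i, q i k := by
  simp [generator]

theorem generator_mulVec_one (q : Fin N → Fin N → ℝ) : generator q *ᵥ 1 = 0 := by
  ext i
  rw [Matrix.mulVec, dotProduct, ← add_sum_erase _ _ (mem_univ i)]
  simp [generator_apply_self,
    sum_congr rfl fun j hj => generator_apply_of_ne q (ne_of_mem_erase hj).symm]

theorem vecMul_generator_eq_zero {q : Fin N → Fin N → ℝ} {π : Fin N → ℝ}
    (h : ∀ j, ∑ i ∈ univ.erase j, π i * q i j = π j * ∑ k ∈ univ.erase j, q j k) :
    π ᵥ* generator q = 0 := by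
  ext j
  have hoff : ∑ i ∈ univ.erase j, π i * generator q i j = ∑ i ∈ univ.erase j, π i * q i j :=
    sum_congr rfl fun i hi => by rw [generator_apply_of_ne q (ne_of_mem_erase hi)]
  rw [Matrix.vecMul, dotProduct, ← add_sum_erase _ _ (mem_univ j), hoff, h, generator_apply_self]
  simp only [Pi.zero_apply]
  ring

theorem abs_exp_generator_apply_sub_le {q : Fin N → Fin N → ℝ}
    (hq : ∀ i j, i ≠ j → 0 < q i j) (hr : ∀ i, 0 < ∑ k ∈ univ.erase i, q i k)
    {π : Fin N → ℝ} (hπ0 : ∀ i, 0 ≤ π i) (hπ1 : ∑ i, π i = 1)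
    (hπ : ∀ j, ∑ i ∈ univ.erase j, π i * q i j = π j * ∑ k ∈ univ.erase j, q j k)
    {P : Matrix (Fin N) (Fin N) ℝ} (hP0 : ∀ i j, 0 ≤ P i j) (hPdiag : ∀ i, P i i = 0)
    {β : ℝ} (hβ0 : 0 ≤ β) (hβ1 : β ≤ 1)
    (hPq : ∀ i j, 0 < P i j → β * ∑ k ∈ univ.erase i, q i k ≤ q i j)
    {L : ℕ} (hL : ∀ i j, ∃ ℓ ≤ L, 0 < (P ^ ℓ) i j) {lam : Fin N → ℝ} (hlam1 : ∑ i, lam i = 1)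
    {lmin : ℝ} (hlmin : 0 < lmin) (hlmin_le : ∀ i, lmin ≤ lam i) {t : ℝ} (ht : 0 ≤ t)
    (i j : Fin N) :
    |exp (t • generator q) i j - π j| ≤
      2 * (1 - (β / 2) ^ L * Real.exp (-((L + 1) * lmin⁻¹))) ^
        ⌊t / ((L + 1) / lmin * ∑ i, lam i * (∑ k ∈ univ.erase i, q i k)⁻¹)⌋₊ := by
  set r : Fin N → ℝ := fun i => ∑ k ∈ univ.erase i, q i k
  set T := ∑ i, lam i * (r i)⁻¹
  have hlam0 : ∀ i, 0 ≤ lam i := fun i => hlmin.le.trans (hlmin_le i)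
  have hlam_le : ∀ i, lmin ≤ r i * T := fun i =>
    (hlmin_le i).trans (le_mul_sum_mul_inv hlam0 hr i)
  have hT : 0 < T := pos_of_mul_pos_right (hlmin.trans_le (hlam_le i)) (hr i).le
  have hdiag : ∀ i, -generator q i i = r i := fun i => by rw [generator_apply_self, neg_neg]
  have : Nonempty (Fin N) := ⟨i⟩
  obtain ⟨k, hk⟩ := exists_mul_sum_mul_inv_le_one hlam0 hlam1 hr
  rw [show (L + 1 : ℝ) / lmin * T = (L + 1) * (T / lmin) by ring]
  refine Matrix.abs_exp_smul_apply_sub_le_of_skeleton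
    (fun i j hij => by rw [generator_apply_of_ne q hij]; exact (hq i j hij).le)
    (generator_mulVec_one q) hπ0 hπ1 (vecMul_generator_eq_zero hπ) hP0 hβ0 hβ1
    (fun i j hij => ?_) hL (k := k) (div_pos hT hlmin) (fun i => ?_) ?_ ht i j
  · have hne : i ≠ j := by rintro rfl; simp [hPdiag] at hij
    rw [hdiag, generator_apply_of_ne q hne]
    exact ⟨hne, hPq i j hij⟩
  · rw [hdiag, mul_div_assoc', le_div_iff₀ hlmin, one_mul]
    exact hlam_le i
  · rw [hdiag, mul_div_assoc', div_le_iff₀ hlmin, inv_mul_cancel₀ hlmin.ne']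
    exact hk

end Generator

theorem stmt13_general (N : ℕ) (hN : 2 ≤ N) (q : ℝ → Fin N → Fin N → ℝ)
    (hpos : ∀ ε > (0:ℝ), ∀ i j, i ≠ j → 0 < q ε i j)
    (P : Matrix (Fin N) (Fin N) ℝ) (hPdiag : ∀ i, P i i = 0)
    (hP : ∀ i j : Fin N, i ≠ j → Tendsto
      (fun ε => q ε i j / ∑ j' ∈ Finset.univ.erase i, q ε i j')
      (𝓝[>] (0:ℝ)) (𝓝 (P i j)))
    (hirr : ∀ i j : Fin N, ∃ n : ℕ, 0 < (P ^ n) i j)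
    (lam : Fin N → ℝ)
    (hlamnn : ∀ i, 0 ≤ lam i) (hlam1 : ∑ i, lam i = 1)
    (hlamstat : ∀ j, ∑ i, lam i * P i j = lam j)
    (μ : ℝ → Fin N → ℝ)
    (hμ : ∀ ε > (0:ℝ), (∀ i, 0 ≤ μ ε i) ∧ (∑ i, μ ε i = 1) ∧
      ∀ j, ∑ i ∈ Finset.univ.erase j, μ ε i * q ε i j
        = μ ε j * ∑ k ∈ Finset.univ.erase j, q ε j k)
    (μ₀ : Fin N → ℝ)
    (hμ₀ : ∀ j, Tendsto (fun ε => μ ε j) (𝓝[>] (0:ℝ)) (𝓝 (μ₀ j)))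
    (t : ℝ → ℝ) (ht : ∀ ε > (0:ℝ), 0 < t ε)
    -- `T̄(ε) ≪ t(ε)`:
    (htT : Tendsto (fun ε =>
        (∑ i, lam i * (∑ j ∈ Finset.univ.erase i, q ε i j)⁻¹) / t ε)
      (𝓝[>] (0:ℝ)) (𝓝 0)) :
    ∀ i j : Fin N, Tendsto
      (fun ε => NormedSpace.exp (t ε • generator (q ε)) i j)
      (𝓝[>] (0:ℝ)) (𝓝 (μ₀ j)) := by
  intro i j
  have : Nontrivial (Fin N) := Fin.nontrivial_iff_two_le.2 hN
  have hr : ∀ ε > 0, ∀ u, 0 < ∑ k ∈ univ.erase u, q ε u k := fun ε hε u =>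
    have ⟨v, hv⟩ := exists_ne u
    sum_pos (fun k hk => hpos ε hε u k (ne_of_mem_erase hk).symm) ⟨v, mem_erase.2 ⟨hv, mem_univ v⟩⟩
  have hP0 := nonneg_of_tendsto_div_sum_erase hP hPdiag
    (eventually_nhdsWithin_of_forall fun ε hε i j hij => (hpos ε hε i j hij).le)
  obtain ⟨lmin, hlmin, hlmin_le⟩ : ∃ lmin, 0 < lmin ∧ ∀ u, lmin ≤ lam u := by
    obtain ⟨u, hu⟩ := Finite.exists_min lam
    exact ⟨lam u, Matrix.pos_of_vecMul_eq_self hP0 hirr hlamnn (funext hlamstat)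
      (by rintro rfl; simp at hlam1) u, hu⟩
  obtain ⟨L, hL⟩ : ∃ L, ∀ u v, ∃ ℓ ≤ L, 0 < (P ^ ℓ) u v :=
    (eventually_all.2 fun u => eventually_all.2 fun v => have ⟨ℓ, hℓ⟩ := hirr u v
      eventually_atTop.2 ⟨ℓ, fun _ hL => ⟨ℓ, hL, hℓ⟩⟩).exists
  obtain ⟨β, hβ0, hβ1, hβ⟩ := exists_eventually_mul_sum_erase_le hP hPdiag
    (eventually_nhdsWithin_of_forall hr)
  set c := (β / 2) ^ L * Real.exp (-((L + 1) * lmin⁻¹))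
  have hc1 : c ≤ 1 := mul_le_one₀ (pow_le_one₀ (by positivity) (by linarith)) (by positivity)
    (Real.exp_le_one_iff.2 (neg_nonpos.2 (by positivity)))
  have hfloor := tendsto_natFloor_div_mul_atTop htT
    (eventually_nhdsWithin_of_forall fun ε hε => sum_pos (fun u _ =>
      mul_pos (hlmin.trans_le (hlmin_le u)) (inv_pos.2 (hr ε hε u))) univ_nonempty)
    (eventually_nhdsWithin_of_forall ht) (C := (L + 1) / lmin) (by positivity)
  refine tendsto_of_abs_sub_le_two_mul_pow (by positivity) hc1 hfloor (hμ₀ j) ?_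
  filter_upwards [hβ, self_mem_nhdsWithin] with ε hεq hε
  obtain ⟨hμ0, hμ1, hμbal⟩ := hμ ε hε
  exact abs_exp_generator_apply_sub_le (hpos ε hε) (hr ε hε) hμ0 hμ1 hμbal hP0 hPdiag hβ0.le hβ1
    hεq hL hlam1 hlmin hlmin_le (ht ε hε).le i j

/-- For an asymptotically regular family with irreducible skeleton chain, if
`T̄(ε) ≪ t(ε)`, then `P_i(X^ε_{t(ε)} = j) → μ(j)` (the limiting stationary
distribution), where the transition probabilities of `X^ε` at time `t` are given by the
matrix exponential `exp(t Q(ε))` of the generator. -/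
theorem stmt13 (N : ℕ) (hN : 2 ≤ N) (q : ℝ → Fin N → Fin N → ℝ)
    (hpos : ∀ ε > (0:ℝ), ∀ i j, i ≠ j → 0 < q ε i j)
    (hAR : ∀ i j k l : Fin N, i ≠ j → k ≠ l → ∃ L : ENNReal,
      Tendsto (fun ε => ENNReal.ofReal (q ε i j / q ε k l)) (𝓝[>] (0:ℝ)) (𝓝 L))
    (P : Matrix (Fin N) (Fin N) ℝ) (hPdiag : ∀ i, P i i = 0)
    (hP : ∀ i j : Fin N, i ≠ j → Tendsto
      (fun ε => q ε i j / ∑ j' ∈ Finset.univ.erase i, q ε i j')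
      (𝓝[>] (0:ℝ)) (𝓝 (P i j)))
    (hirr : ∀ i j : Fin N, ∃ n : ℕ, 0 < (P ^ n) i j)
    (lam : Fin N → ℝ)
    (hlamnn : ∀ i, 0 ≤ lam i) (hlam1 : ∑ i, lam i = 1)
    (hlamstat : ∀ j, ∑ i, lam i * P i j = lam j)
    (μ : ℝ → Fin N → ℝ)
    (hμ : ∀ ε > (0:ℝ), (∀ i, 0 ≤ μ ε i) ∧ (∑ i, μ ε i = 1) ∧
      ∀ j, ∑ i ∈ Finset.univ.erase j, μ ε i * q ε i j
        = μ ε j * ∑ k ∈ Finset.univ.erase j, q ε j k)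
    (μ₀ : Fin N → ℝ)
    (hμ₀ : ∀ j, Tendsto (fun ε => μ ε j) (𝓝[>] (0:ℝ)) (𝓝 (μ₀ j)))
    (t : ℝ → ℝ) (ht : ∀ ε > (0:ℝ), 0 < t ε)
    -- `T̄(ε) ≪ t(ε)`:
    (htT : Tendsto (fun ε =>
        (∑ i, lam i * (∑ j ∈ Finset.univ.erase i, q ε i j)⁻¹) / t ε)
      (𝓝[>] (0:ℝ)) (𝓝 0)) :
    ∀ i j : Fin N, Tendsto
      (fun ε => NormedSpace.exp (t ε • generator (q ε)) i j)
      (𝓝[>] (0:ℝ)) (𝓝 (μ₀ j)) :=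
  stmt13_general N hN q hpos P hPdiag hP hirr lam hlamnn hlam1 hlamstat μ hμ μ₀ hμ₀ t ht htT
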